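/- arXiv:1507.08430 — 7 statements merged into one kernel-verified Lean document; each statement's English description precedes it below -/
import Mathlib

section
/- Let A = (1, 20, 200, 1800), B = (1, 6, 30, 60), and C = (40, 60, 10, 1), each viewed as finite sequences of nonnegative integers (extended by zeros). Then A, B, C are log-concave with no internal zeros, A and B are weakly synchronized, but the convolution sequences A*C and B*C are NOT weakly synchronized; specifically, with D = A*C and E = B*C, one has D_1·E_3 + D_3·E_1 > 2·D_2·E_2. -/
def LogConcave (a : ℤ → ℝ) : Prop := ∀ k : ℤ, a (k - 1) * a (k + 1) ≤ a k ^ 2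

def NoInternalZeros (a : ℤ → ℝ) : Prop :=
  ∀ i j k : ℤ, i < j → 0 < a i * a j → i ≤ k → k ≤ j → 0 < a k

def Nonneg (a : ℤ → ℝ) : Prop := ∀ k : ℤ, 0 ≤ a k

def Sync (a b : ℤ → ℝ) : Prop :=
  ∀ k : ℤ, a (k - 1) * b (k + 1) ≤ a k * b k ∧ a (k + 1) * b (k - 1) ≤ a k * b k

def WeakSync (a b : ℤ → ℝ) : Prop :=
  ∀ k : ℤ, a (k - 1) * b (k + 1) + a (k + 1) * b (k - 1) ≤ 2 * (a k * b k)

def PartSync (a b : ℤ → ℝ) : Prop :=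
  ∀ m n : ℤ, n ≤ m →
    a (m + 1) * b (n - 1) + a (n - 1) * b (m + 1) ≤ a m * b n + a n * b m

noncomputable def conv (a b : ℤ → ℝ) : ℤ → ℝ := fun n => ∑ᶠ k : ℤ, a k * b (n - k)

/-! All sequences involved are supported on `{0, 1, 2, 3}`, so each property reduces to finitely
many numerical inequalities. Weak synchronization of `A * C` and `B * C` fails at `k = 2`, narrowly:
`2 · 9210 · 1570 = 28919400 < 28924760 = 860 · 4261 + 84201 · 300`. -/

section Seq4

variable {a₀ a₁ a₂ a₃ b₀ b₁ b₂ b₃ : ℝ}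

def seq4 (a₀ a₁ a₂ a₃ : ℝ) : ℤ → ℝ := fun k =>
  if k = 0 then a₀ else if k = 1 then a₁ else if k = 2 then a₂ else if k = 3 then a₃ else 0

theorem seq4_eq_zero {k : ℤ} (hk : k < 0 ∨ 3 < k) : seq4 a₀ a₁ a₂ a₃ k = 0 := by
  unfold seq4
  split_ifs <;> first | rfl | omega

theorem support_seq4_subset :
    Function.support (seq4 a₀ a₁ a₂ a₃) ⊆ ↑({0, 1, 2, 3} : Finset ℤ) := by
  intro k hk
  by_contra hks
  simp only [Finset.coe_insert, Finset.coe_singleton, Set.mem_insert_iff,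
    Set.mem_singleton_iff] at hks
  exact hk (seq4_eq_zero (by omega))

theorem conv_eq_sum_of_support_subset {a : ℤ → ℝ} (c : ℤ → ℝ) {s : Finset ℤ}
    (ha : Function.support a ⊆ s) (n : ℤ) : conv a c n = ∑ k ∈ s, a k * c (n - k) :=
  finsum_eq_finsetSum_of_support_subset _ fun _ hk =>
    ha (Function.support_mul_subset_left _ _ hk)

theorem conv_seq4_left (c : ℤ → ℝ) (n : ℤ) :
    conv (seq4 a₀ a₁ a₂ a₃) c n =
      a₀ * c n + a₁ * c (n - 1) + a₂ * c (n - 2) + a₃ * c (n - 3) := by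
  rw [conv_eq_sum_of_support_subset c support_seq4_subset]
  simp [seq4, add_assoc]

theorem logConcave_seq4 (h₁ : a₀ * a₂ ≤ a₁ ^ 2) (h₂ : a₁ * a₃ ≤ a₂ ^ 2) :
    LogConcave (seq4 a₀ a₁ a₂ a₃) := by
  intro k
  by_cases hk : -1 ≤ k ∧ k ≤ 4
  · obtain ⟨hlo, hhi⟩ := hk
    interval_cases k <;> simp [seq4, h₁, h₂, sq_nonneg]
  · rw [seq4_eq_zero (k := k - 1) (by omega), zero_mul]
    exact sq_nonneg _

theorem noInternalZeros_of_pos_on_Icc {a : ℤ → ℝ} {m n : ℤ}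
    (hpos : ∀ k, m ≤ k → k ≤ n → 0 < a k) (hzero : ∀ k, k < m ∨ n < k → a k = 0) :
    NoInternalZeros a := by
  intro i j k _ hij hik hkj
  have hi : m ≤ i := by
    by_contra h
    simp [hzero i (by omega)] at hij
  have hj : j ≤ n := by
    by_contra h
    simp [hzero j (by omega)] at hij
  exact hpos k (by omega) (by omega)

theorem noInternalZeros_seq4 (h₀ : 0 < a₀) (h₁ : 0 < a₁) (h₂ : 0 < a₂) (h₃ : 0 < a₃) :
    NoInternalZeros (seq4 a₀ a₁ a₂ a₃) := by
  refine noInternalZeros_of_pos_on_Icc (m := 0) (n := 3) (fun k hlo hhi => ?_)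
    fun _ => seq4_eq_zero
  interval_cases k <;> simpa [seq4]

theorem weakSync_seq4 (h₀ : 0 ≤ a₀ * b₀) (h₁ : a₀ * b₂ + a₂ * b₀ ≤ 2 * (a₁ * b₁))
    (h₂ : a₁ * b₃ + a₃ * b₁ ≤ 2 * (a₂ * b₂)) (h₃ : 0 ≤ a₃ * b₃) :
    WeakSync (seq4 a₀ a₁ a₂ a₃) (seq4 b₀ b₁ b₂ b₃) := by
  intro k
  by_cases hk : -1 ≤ k ∧ k ≤ 4
  · obtain ⟨hlo, hhi⟩ := hk
    interval_cases k <;> simp [seq4, h₀, h₁, h₂, h₃]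
  · have hlo : k - 1 < 0 ∨ 3 < k - 1 := by omega
    have hhi : k + 1 < 0 ∨ 3 < k + 1 := by omega
    simp [seq4_eq_zero hlo, seq4_eq_zero hhi, seq4_eq_zero (k := k) (by omega)]

end Seq4

theorem stmt0 :
    let A : ℤ → ℝ := fun k => if k = 0 then 1 else if k = 1 then 20 else if k = 2 then 200 else if k = 3 then 1800 else 0
    let B : ℤ → ℝ := fun k => if k = 0 then 1 else if k = 1 then 6 else if k = 2 then 30 else if k = 3 then 60 else 0
    let C : ℤ → ℝ := fun k => if k = 0 then 40 else if k = 1 then 60 else if k = 2 then 10 else if k = 3 then 1 else 0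
    let D : ℤ → ℝ := conv A C
    let E : ℤ → ℝ := conv B C
    LogConcave A ∧ NoInternalZeros A ∧
    LogConcave B ∧ NoInternalZeros B ∧
    LogConcave C ∧ NoInternalZeros C ∧
    WeakSync A B ∧ ¬ WeakSync D E ∧
    2 * (D 2 * E 2) < D 1 * E 3 + D 3 * E 1 := by
  intro A B C D E
  have hD : D 1 = 860 ∧ D 2 = 9210 ∧ D 3 = 84201 := by
    simp only [D, show A = seq4 1 20 200 1800 from rfl, conv_seq4_left]
    norm_num [C]
  have hE : E 1 = 300 ∧ E 2 = 1570 ∧ E 3 = 4261 := by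
    simp only [E, show B = seq4 1 6 30 60 from rfl, conv_seq4_left]
    norm_num [C]
  have hfail : 2 * (D 2 * E 2) < D 1 * E 3 + D 3 * E 1 := by
    rw [hD.1, hD.2.1, hD.2.2, hE.1, hE.2.1, hE.2.2]
    norm_num
  refine ⟨logConcave_seq4 ?_ ?_, noInternalZeros_seq4 ?_ ?_ ?_ ?_,
    logConcave_seq4 ?_ ?_, noInternalZeros_seq4 ?_ ?_ ?_ ?_,
    logConcave_seq4 ?_ ?_, noInternalZeros_seq4 ?_ ?_ ?_ ?_,
    weakSync_seq4 ?_ ?_ ?_ ?_, fun hsync => (hsync 2).not_gt (by norm_num; exact hfail), hfail⟩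
  all_goals norm_num
end

section
/- The sequences A = (1, 2, 3), B = (1, 3, 8), C = (1, 4, 15) (extended by zeros) satisfy: A and B are partially synchronized, B and C are partially synchronized, but A and C are not partially synchronized. Hence the partial synchronicity relation is not transitive. -/
/-! Only the case `m = n = 1` of partial synchronicity can fail for sequences supported on
`{0, 1, 2}`: in every other case the left-hand side has a factor outside the support. So the
relation reduces to one inequality between the terms, which holds for `(A, B)` and `(B, C)`
but not for `(A, C)`, since `3 + 15 > 2 · 2 · 4`. -/

def seq3 (x₀ x₁ x₂ : ℝ) : ℤ → ℝ :=
  fun k => if k = 0 then x₀ else if k = 1 then x₁ else if k = 2 then x₂ else 0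

section seq3

variable {x₀ x₁ x₂ y₀ y₁ y₂ : ℝ}

lemma seq3_nonneg (h₀ : 0 ≤ x₀) (h₁ : 0 ≤ x₁) (h₂ : 0 ≤ x₂) : Nonneg (seq3 x₀ x₁ x₂) := by
  intro k
  unfold seq3
  split_ifs <;> first | assumption | exact le_rfl

lemma seq3_eq_zero {k : ℤ} (hk : k < 0 ∨ 2 < k) : seq3 x₀ x₁ x₂ k = 0 := by
  unfold seq3
  rw [if_neg, if_neg, if_neg] <;> omega

theorem partSync_seq3_iff (hx₀ : 0 ≤ x₀) (hx₁ : 0 ≤ x₁) (hx₂ : 0 ≤ x₂)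
    (hy₀ : 0 ≤ y₀) (hy₁ : 0 ≤ y₁) (hy₂ : 0 ≤ y₂) :
    PartSync (seq3 x₀ x₁ x₂) (seq3 y₀ y₁ y₂) ↔ x₂ * y₀ + x₀ * y₂ ≤ x₁ * y₁ + x₁ * y₁ := by
  constructor
  · intro h
    simpa [seq3] using h 1 1 le_rfl
  · intro h m n hnm
    by_cases hmn : m = 1 ∧ n = 1
    · obtain ⟨rfl, rfl⟩ := hmn
      simpa [seq3] using h
    have hout : 2 < m + 1 ∨ n - 1 < 0 := by omega
    have hlhs : seq3 x₀ x₁ x₂ (m + 1) * seq3 y₀ y₁ y₂ (n - 1)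
        + seq3 x₀ x₁ x₂ (n - 1) * seq3 y₀ y₁ y₂ (m + 1) = 0 := by
      rcases hout with hk | hk
      · simp [seq3_eq_zero (Or.inr hk)]
      · simp [seq3_eq_zero (Or.inl hk)]
    have hx := seq3_nonneg hx₀ hx₁ hx₂
    have hy := seq3_nonneg hy₀ hy₁ hy₂
    rw [hlhs]
    exact add_nonneg (mul_nonneg (hx m) (hy n)) (mul_nonneg (hx n) (hy m))

end seq3

theorem stmt4 :
    let A : ℤ → ℝ := fun k => if k = 0 then 1 else if k = 1 then 2 else if k = 2 then 3 else 0
    let B : ℤ → ℝ := fun k => if k = 0 then 1 else if k = 1 then 3 else if k = 2 then 8 else 0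
    let C : ℤ → ℝ := fun k => if k = 0 then 1 else if k = 1 then 4 else if k = 2 then 15 else 0
    PartSync A B ∧ PartSync B C ∧ ¬ PartSync A C := by
  show PartSync (seq3 1 2 3) (seq3 1 3 8) ∧ PartSync (seq3 1 3 8) (seq3 1 4 15)
    ∧ ¬ PartSync (seq3 1 2 3) (seq3 1 4 15)
  refine ⟨?_, ?_, ?_⟩ <;>
    rw [partSync_seq3_iff (by norm_num) (by norm_num) (by norm_num) (by norm_num) (by norm_num)
      (by norm_num)] <;>
    norm_num
end

section
/- Let A and B be nonzero log-concave nonnegative sequences without internal zeros, with head indices h(A), h(B) (the index of the first positive term) and tail indices t(A), t(B) (the index of the last positive term). If A and B are partially synchronized, then |h(A) - h(B)| ≤ 1 and |t(A) - t(B)| ≤ 1. -/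
/-! If the head of `B` lay two or more places after the head `h` of `A`, partial synchronization
with `m + 1` the head of `B` and `n - 1 = h` would bound the positive product of the two head
terms by a sum of products that all contain a vanishing term of `B`. Tails are heads of the
reflected sequences, and partial synchronization is invariant under swapping and reflecting. -/

theorem PartSync.symm {a b : ℤ → ℝ} (h : PartSync a b) : PartSync b a := by
  intro m n hnm
  linarith [h m n hnm]

theorem PartSync.comp_neg {a b : ℤ → ℝ} (h : PartSync a b) :
    PartSync (fun k => a (-k)) (fun k => b (-k)) := by
  intro m n hnm
  have := h (-n) (-m) (by omega)
  simp only [show -(m + 1) = -m - 1 by ring, show -(n - 1) = -n + 1 by ring] at *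
  linarith

theorem PartSync.le_add_one_of_forall_lt_eq_zero {a b : ℤ → ℝ} (h : PartSync a b) {i j : ℤ}
    (hai : 0 < a i) (hbj : 0 < b j) (hb : ∀ k < j, b k = 0) : j ≤ i + 1 := by
  by_contra! hij
  have key := h (j - 1) (i + 1) (by omega)
  rw [sub_add_cancel, add_sub_cancel_right, hb i (by omega), hb (i + 1) (by omega),
    hb (j - 1) (by omega)] at key
  nlinarith [mul_pos hai hbj]

theorem stmt5_general (A B : ℤ → ℝ)
    (hA' : ℤ) (tA : ℤ) (hB' : ℤ) (tB : ℤ)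
    (hhA : 0 < A hA' ∧ ∀ k < hA', A k = 0)
    (htA : 0 < A tA ∧ ∀ k > tA, A k = 0)
    (hhB : 0 < B hB' ∧ ∀ k < hB', B k = 0)
    (htB : 0 < B tB ∧ ∀ k > tB, B k = 0)
    (hps : PartSync A B) :
    |hA' - hB'| ≤ 1 ∧ |tA - tB| ≤ 1 := by
  have hAB := hps.le_add_one_of_forall_lt_eq_zero hhA.1 hhB.1 hhB.2
  have hBA := hps.symm.le_add_one_of_forall_lt_eq_zero hhB.1 hhA.1 hhA.2
  have tAB := hps.comp_neg.le_add_one_of_forall_lt_eq_zero (i := -tA) (j := -tB)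
    (by simpa using htA.1) (by simpa using htB.1) fun k hk => htB.2 (-k) (by omega)
  have tBA := hps.symm.comp_neg.le_add_one_of_forall_lt_eq_zero (i := -tB) (j := -tA)
    (by simpa using htB.1) (by simpa using htA.1) fun k hk => htA.2 (-k) (by omega)
  exact ⟨abs_le.2 ⟨by omega, by omega⟩, abs_le.2 ⟨by omega, by omega⟩⟩

theorem stmt5 (A B : ℤ → ℝ) (hA : Nonneg A) (hB : Nonneg B)
    (hAlc : LogConcave A) (hAnz : NoInternalZeros A)
    (hBlc : LogConcave B) (hBnz : NoInternalZeros B)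
    (hA' : ℤ) (tA : ℤ) (hB' : ℤ) (tB : ℤ)
    (hhA : 0 < A hA' ∧ ∀ k < hA', A k = 0)
    (htA : 0 < A tA ∧ ∀ k > tA, A k = 0)
    (hhB : 0 < B hB' ∧ ∀ k < hB', B k = 0)
    (htB : 0 < B tB ∧ ∀ k > tB, B k = 0)
    (hps : PartSync A B) :
    |hA' - hB'| ≤ 1 ∧ |tA - tB| ≤ 1 :=
  stmt5_general A B hA' tA hB' tB hhA htA hhB htB hps
end

section
/- Let A = (a_k) and B = (b_k) be log-concave nonnegative sequences that are partially synchronized. Then for any nonnegative reals u and v, the sequence uA + vB = (u a_k + v b_k) is log-concave. -/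
theorem WeakSync.of_partSync {a b : ℤ → ℝ} (h : PartSync a b) : WeakSync a b := fun k => by
  linarith [h k k le_rfl]

theorem LogConcave.add_of_weakSync {a b : ℤ → ℝ} (ha : LogConcave a) (hb : LogConcave b)
    (hab : WeakSync a b) {u v : ℝ} (huv : 0 ≤ u * v) :
    LogConcave (fun k => u * a k + v * b k) := fun k => by
  have hexpand : (u * a (k - 1) + v * b (k - 1)) * (u * a (k + 1) + v * b (k + 1)) =
      u ^ 2 * (a (k - 1) * a (k + 1)) + v ^ 2 * (b (k - 1) * b (k + 1)) +
        u * v * (a (k - 1) * b (k + 1) + a (k + 1) * b (k - 1)) := by ring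
  calc (u * a (k - 1) + v * b (k - 1)) * (u * a (k + 1) + v * b (k + 1))
      ≤ u ^ 2 * a k ^ 2 + v ^ 2 * b k ^ 2 + u * v * (2 * (a k * b k)) := by
        rw [hexpand]
        gcongr
        exacts [ha k, hb k, hab k]
    _ = (u * a k + v * b k) ^ 2 := by ring

theorem stmt7_general (A B : ℤ → ℝ)
    (hAlc : LogConcave A) (hBlc : LogConcave B)
    (hps : PartSync A B) (u v : ℝ) (hu : 0 ≤ u) (hv : 0 ≤ v) :
    LogConcave (fun k => u * A k + v * B k) :=
  hAlc.add_of_weakSync hBlc (.of_partSync hps) (mul_nonneg hu hv)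

theorem stmt7 (A B : ℤ → ℝ) (hA : Nonneg A) (hB : Nonneg B)
    (hAlc : LogConcave A) (hBlc : LogConcave B)
    (hps : PartSync A B) (u v : ℝ) (hu : 0 ≤ u) (hv : 0 ≤ v) :
    LogConcave (fun k => u * A k + v * B k) :=
  stmt7_general A B hAlc hBlc hps u v hu hv
end

section
/- Let A, B be partially synchronized sequences of nonnegative reals and fix integers m ≥ n. Define f(p,q) = a_p b_q + a_q b_p and g(k,l) = f(m−k, n−l) − f(m+1−l, n−1−k). Then g(k,l) ≥ 0 for all integers k ≥ l. -/
noncomputable def fAB (A B : ℤ → ℝ) (p q : ℤ) : ℝ := A p * B q + A q * B p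

noncomputable def gAB (A B : ℤ → ℝ) (m n k l : ℤ) : ℝ :=
  fAB A B (m - k) (n - l) - fAB A B (m + 1 - l) (n - 1 - k)

/-! Under partial synchronicity the symmetric quantity `fAB A B p q` only decreases when the pair
`(p, q)` is spread apart one step at a time keeping `p + q` fixed. Both pairs in `gAB` have the same
sum, and for `l ≤ k` and `n ≤ m` the second one, `(m + 1 - l, n - 1 - k)`, is the more spread out. -/

theorem fAB_comm (A B : ℤ → ℝ) (p q : ℤ) : fAB A B p q = fAB A B q p := by
  unfold fAB; ring

theorem PartSync.fAB_spread_le {A B : ℤ → ℝ} (hps : PartSync A B) {p q : ℤ} (hqp : q ≤ p) :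
    ∀ r, p ≤ r → fAB A B r (p + q - r) ≤ fAB A B p q := by
  refine Int.leInduction (by rw [add_sub_cancel_left]) fun r hpr ih => ?_
  calc fAB A B (r + 1) (p + q - (r + 1))
      = fAB A B (r + 1) (p + q - r - 1) := by rw [sub_sub]
    _ ≤ fAB A B r (p + q - r) := hps r (p + q - r) (by omega)
    _ ≤ fAB A B p q := ih

theorem stmt11_general (A B : ℤ → ℝ)
    (hps : PartSync A B) (m n : ℤ) (hmn : n ≤ m) :
    ∀ k l : ℤ, l ≤ k → 0 ≤ gAB A B m n k l := by
  intro k l hlk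
  rw [gAB, sub_nonneg]
  rcases le_total (n - l) (m - k) with h | h
  · calc fAB A B (m + 1 - l) (n - 1 - k)
        = fAB A B (m + 1 - l) (m - k + (n - l) - (m + 1 - l)) := by congr 1; ring
      _ ≤ fAB A B (m - k) (n - l) := hps.fAB_spread_le h _ (by omega)
  · calc fAB A B (m + 1 - l) (n - 1 - k)
        = fAB A B (m + 1 - l) (n - l + (m - k) - (m + 1 - l)) := by congr 1; ring
      _ ≤ fAB A B (n - l) (m - k) := hps.fAB_spread_le h _ (by omega)
      _ = fAB A B (m - k) (n - l) := fAB_comm A B _ _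

theorem stmt11 (A B : ℤ → ℝ) (hA : Nonneg A) (hB : Nonneg B)
    (hps : PartSync A B) (m n : ℤ) (hmn : n ≤ m) :
    ∀ k l : ℤ, l ≤ k → 0 ≤ gAB A B m n k l :=
  stmt11_general A B hps m n hmn
end

section
/- Let A, B, C be nonzero log-concave nonnegative sequences without internal zeros (with finitely many nonzero terms each). If A and B are partially synchronized, then the convolutions A*C and B*C are partially synchronized. -/
open Function

theorem finsum_nonneg_of_involutive {α M : Type*} [AddCommGroup M] [LinearOrder M]
    [IsOrderedAddMonoid M] {f : α → M} (hf : (support f).Finite) {σ : α → α}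
    (hσ : Involutive σ) (h : ∀ p, 0 ≤ f p + f (σ p)) : 0 ≤ ∑ᶠ p, f p := by
  have hfσ : (support fun p => f (σ p)).Finite := hf.preimage hσ.injective.injOn
  have hsum : ∑ᶠ p, (f p + f (σ p)) = ∑ᶠ p, f p + ∑ᶠ p, f p := by
    rw [finsum_add_distrib hf hfσ, ← hσ.coe_toPerm, finsum_comp_equiv]
  have h2 : 0 ≤ ∑ᶠ p, f p + ∑ᶠ p, f p := hsum ▸ finsum_nonneg h
  by_contra! hneg
  exact (add_neg hneg hneg).not_ge h2

def exchangeDefect (c : ℤ → ℝ) (x y : ℤ) : ℝ := c x * c y - c (x + 1) * c (y - 1)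

theorem exchangeDefect_swap (c : ℤ → ℝ) (x y : ℤ) :
    exchangeDefect c (y - 1) (x + 1) = -exchangeDefect c x y := by
  simp only [exchangeDefect, sub_add_cancel, add_sub_cancel_right]
  ring

theorem LogConcave.exchangeDefect_nonneg_of_pos {c : ℤ → ℝ} (hc : LogConcave c) {x y : ℤ}
    (hyx : y ≤ x) (hpos : ∀ t, y - 1 ≤ t → t ≤ x + 1 → 0 < c t) :
    0 ≤ exchangeDefect c x y := by
  rw [exchangeDefect, sub_nonneg]
  induction x, hyx using Int.leInduction with
  | base => nlinarith [hc y]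
  | succ x hyx ih =>
    have ih := ih fun t h1 h2 => hpos t h1 (by omega)
    have lc := hc (x + 1)
    rw [add_sub_cancel_right] at lc
    have hx : 0 < c x := hpos x (by omega) (by omega)
    have hy : 0 ≤ c (y - 1) := (hpos _ le_rfl (by omega)).le
    refine le_of_mul_le_mul_left ?_ hx
    -- chain the two ratio bounds `c (x + 2) / c (x + 1) ≤ c (x + 1) / c x ≤ c y / c (y - 1)`
    have hx1 : 0 ≤ c (x + 1) := (hpos (x + 1) (by omega) (by omega)).le
    nlinarith [mul_le_mul_of_nonneg_right lc hy, mul_le_mul_of_nonneg_left ih hx1]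

theorem LogConcave.exchangeDefect_nonneg {c : ℤ → ℝ} (h0 : Nonneg c) (hc : LogConcave c)
    (hnz : NoInternalZeros c) {x y : ℤ} (hyx : y ≤ x) : 0 ≤ exchangeDefect c x y := by
  rcases (mul_nonneg (h0 (x + 1)) (h0 (y - 1))).eq_or_lt with h | h
  · rw [exchangeDefect, ← h, sub_zero]
    exact mul_nonneg (h0 x) (h0 y)
  · exact hc.exchangeDefect_nonneg_of_pos hyx fun t h1 h2 =>
      hnz (y - 1) (x + 1) t (by omega) (by rwa [mul_comm]) h1 h2

theorem PartSync.spread {a b : ℤ → ℝ} (h : PartSync a b) {x y : ℤ} (hyx : y ≤ x) {t : ℤ}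
    (ht : 0 ≤ t) : a (x + t) * b (y - t) + a (y - t) * b (x + t) ≤ a x * b y + a y * b x := by
  induction t, ht using Int.leInduction with
  | base => simp
  | succ t ht ih =>
    have := h (x + t) (y - t) (by omega)
    rw [← add_assoc, ← sub_sub]
    linarith

theorem PartSync.le_of_le_of_add_eq {a b : ℤ → ℝ} (h : PartSync a b) {k l u v : ℤ}
    (hk : v ≤ k) (hl : v ≤ l) (huv : u + v = k + l) :
    a u * b v + a v * b u ≤ a k * b l + a l * b k := by
  rcases le_total l k with hlk | hkl
  · have := h.spread hlk (t := l - v) (by omega)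
    rwa [show k + (l - v) = u by omega, show l - (l - v) = v by omega] at this
  · have := h.spread hkl (t := k - v) (by omega)
    rw [show l + (k - v) = u by omega, show k - (k - v) = v by omega] at this
    linarith

theorem conv_eq_sum {a : ℤ → ℝ} (c : ℤ → ℝ) {U : Finset ℤ} (ha : support a ⊆ U) (r : ℤ) :
    conv a c r = ∑ k ∈ U, a k * c (r - k) :=
  finsum_eq_sum_of_support_subset _ fun _ hk => ha (left_ne_zero_of_mul hk)

theorem conv_mul_conv_eq_sum {a b : ℤ → ℝ} (c : ℤ → ℝ) {U : Finset ℤ} (ha : support a ⊆ U)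
    (hb : support b ⊆ U) (r s : ℤ) :
    conv a c r * conv b c s = ∑ p ∈ U ×ˢ U, a p.1 * b p.2 * (c (r - p.1) * c (s - p.2)) := by
  rw [conv_eq_sum c ha, conv_eq_sum c hb, Finset.sum_mul_sum, Finset.sum_product]
  exact Finset.sum_congr rfl fun _ _ => Finset.sum_congr rfl fun _ _ => by ring

def syncDefectTerm (a b c : ℤ → ℝ) (m n : ℤ) (p : ℤ × ℤ) : ℝ :=
  (a p.1 * b p.2 + a p.2 * b p.1) * exchangeDefect c (m - p.1) (n - p.2)

theorem support_syncDefectTerm_subset (a b c : ℤ → ℝ) (m n : ℤ) :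
    support (syncDefectTerm a b c m n) ⊆ (support a ∪ support b) ×ˢ (support a ∪ support b) := by
  intro p hp
  have hS : a p.1 * b p.2 + a p.2 * b p.1 ≠ 0 := left_ne_zero_of_mul hp
  by_contra hp'
  simp only [Set.mem_prod, Set.mem_union, mem_support, not_and_or, not_or, not_not] at hp'
  rcases hp' with ⟨h1, h1'⟩ | ⟨h2, h2'⟩ <;> simp_all

theorem conv_partSync_sub_eq_sum {a b : ℤ → ℝ} (c : ℤ → ℝ) {U : Finset ℤ} (ha : support a ⊆ U)
    (hb : support b ⊆ U) (m n : ℤ) :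
    conv a c m * conv b c n + conv a c n * conv b c m
        - (conv a c (m + 1) * conv b c (n - 1) + conv a c (n - 1) * conv b c (m + 1))
      = ∑ p ∈ U ×ˢ U, syncDefectTerm a b c m n p := by
  have swap : ∑ p ∈ U ×ˢ U, a p.2 * b p.1 * exchangeDefect c (m - p.1) (n - p.2)
      = ∑ p ∈ U ×ˢ U, a p.1 * b p.2 * exchangeDefect c (m - p.2) (n - p.1) := by
    rw [Finset.sum_product, Finset.sum_product_right]
  simp only [syncDefectTerm, add_mul, Finset.sum_add_distrib]
  rw [swap]
  simp only [conv_mul_conv_eq_sum c ha hb, ← Finset.sum_add_distrib, ← Finset.sum_sub_distrib]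
  refine Finset.sum_congr rfl fun p _ => ?_
  rw [exchangeDefect, exchangeDefect, add_sub_right_comm m 1 p.1, add_sub_right_comm m 1 p.2,
    sub_right_comm n 1 p.1, sub_right_comm n 1 p.2]
  ring

theorem conv_partSync_sub_eq_finsum {a b : ℤ → ℝ} (ha : (support a).Finite)
    (hb : (support b).Finite) (c : ℤ → ℝ) (m n : ℤ) :
    conv a c m * conv b c n + conv a c n * conv b c m
        - (conv a c (m + 1) * conv b c (n - 1) + conv a c (n - 1) * conv b c (m + 1))
      = ∑ᶠ p, syncDefectTerm a b c m n p := by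
  set U := (ha.union hb).toFinset
  have hU : (support a ∪ support b) ×ˢ (support a ∪ support b) = ↑(U ×ˢ U) := by
    rw [Finset.coe_product, Set.Finite.coe_toFinset]
  rw [conv_partSync_sub_eq_sum (U := U) c (fun k hk => by simp [U, hk])
      (fun k hk => by simp [U, hk]),
    finsum_eq_sum_of_support_subset _ (hU ▸ support_syncDefectTerm_subset a b c m n)]

def twist (d : ℤ) (p : ℤ × ℤ) : ℤ × ℤ := (p.2 + d + 1, p.1 - d - 1)

theorem twist_involutive (d : ℤ) : Involutive (twist d) := fun p => by
  simp only [twist]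
  ext <;> simp only <;> ring

theorem syncDefectTerm_add_twist_nonneg {a b c : ℤ → ℝ} (hab : PartSync a b)
    (hc : ∀ x y, y ≤ x → 0 ≤ exchangeDefect c x y) {m n : ℤ} (hnm : n ≤ m) (p : ℤ × ℤ) :
    0 ≤ syncDefectTerm a b c m n p + syncDefectTerm a b c m n (twist (m - n) p) := by
  set S : ℤ × ℤ → ℝ := fun p => a p.1 * b p.2 + a p.2 * b p.1
  have hpair : ∀ q, syncDefectTerm a b c m n q + syncDefectTerm a b c m n (twist (m - n) q)
      = (S q - S (twist (m - n) q)) * exchangeDefect c (m - q.1) (n - q.2) := fun q => by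
    have : exchangeDefect c (m - (twist (m - n) q).1) (n - (twist (m - n) q).2)
        = exchangeDefect c (n - q.2 - 1) (m - q.1 + 1) := by
      simp only [twist]; ring_nf
    rw [syncDefectTerm, syncDefectTerm, this, exchangeDefect_swap]
    ring
  have half : ∀ q : ℤ × ℤ, n - q.2 ≤ m - q.1 →
      0 ≤ syncDefectTerm a b c m n q + syncDefectTerm a b c m n (twist (m - n) q) := fun q hq => by
    rw [hpair]
    refine mul_nonneg (sub_nonneg.2 ?_) (hc _ _ hq)
    exact hab.le_of_le_of_add_eq (by simp only [twist]; omega) (by simp only [twist]; omega)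
      (by simp only [twist]; ring)
  rcases le_or_gt (n - p.2) (m - p.1) with hp | hp
  · exact half p hp
  rcases (Int.add_one_le_of_lt hp).eq_or_lt with hp' | hp'
  · rw [hpair, exchangeDefect, ← hp', add_sub_cancel_right, mul_comm (c (m - p.1)), sub_self,
      mul_zero]
  · have := half (twist (m - n) p) (by simp only [twist]; omega)
    rwa [twist_involutive, add_comm] at this

theorem stmt12_general (A B C : ℤ → ℝ)
    (hC : Nonneg C)
    (hAfin : (Function.support A).Finite) (hBfin : (Function.support B).Finite)
    (hClc : LogConcave C) (hCnz : NoInternalZeros C)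
    (hps : PartSync A B) :
    PartSync (conv A C) (conv B C) := by
  intro m n hnm
  have hfin : (support (syncDefectTerm A B C m n)).Finite :=
    ((hAfin.union hBfin).prod (hAfin.union hBfin)).subset (support_syncDefectTerm_subset ..)
  rw [← sub_nonneg, conv_partSync_sub_eq_finsum hAfin hBfin C m n]
  exact finsum_nonneg_of_involutive hfin (twist_involutive (m - n))
    (syncDefectTerm_add_twist_nonneg hps (fun _ _ => hClc.exchangeDefect_nonneg hC hCnz) hnm)

theorem stmt12 (A B C : ℤ → ℝ)
    (hA : Nonneg A) (hB : Nonneg B) (hC : Nonneg C)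
    (hAfin : (Function.support A).Finite) (hBfin : (Function.support B).Finite)
    (hCfin : (Function.support C).Finite)
    (hAne : ∃ k, A k ≠ 0) (hBne : ∃ k, B k ≠ 0) (hCne : ∃ k, C k ≠ 0)
    (hAlc : LogConcave A) (hAnz : NoInternalZeros A)
    (hBlc : LogConcave B) (hBnz : NoInternalZeros B)
    (hClc : LogConcave C) (hCnz : NoInternalZeros C)
    (hps : PartSync A B) :
    PartSync (conv A C) (conv B C) :=
  stmt12_general A B C hC hAfin hBfin hClc hCnz hps
end

section
/- The convolution of two log-concave nonnegative sequences without internal zeros (each with finitely many positive terms) is log-concave and has no internal zeros. -/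
/-!
For a nonnegative log-concave sequence `z` without internal zeros, the gap
`z k * z l - z (k + 1) * z (l - 1)` is `≥ 0` when `l ≤ k + 1` and `≤ 0` when `k + 1 ≤ l`:
on a run of positive terms the ratios `z (m + 1) / z m` decrease. Expanding
`c n ^ 2 - c (n - 1) * c (n + 1)` for `c = A * B` as a double sum over `(k, l)` and symmetrizing
under `(k, l) ↦ (l - 1, k + 1)` writes twice this quantity as the sum of the products of the
`A`-gap at `(k, l)` and the `B`-gap at `(n - l, n - k)`, two numbers of the same sign.
For internal zeros, a positive term `A p * B (i - p)` of `c i` and a positive term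
`A q * B (j - q)` of `c j` give, for `i ≤ k ≤ j`, a positive term `A r * B (k - r)` of `c k`
with `r` between `p` and `q` and `k - r` between `i - p` and `j - q`.
-/

open Function

def spreadGap (z : ℤ → ℝ) (k l : ℤ) : ℝ := z k * z l - z (k + 1) * z (l - 1)

lemma spreadGap_eq_neg (z : ℤ → ℝ) (k l : ℤ) :
    spreadGap z k l = -spreadGap z (l - 1) (k + 1) := by
  simp only [spreadGap, sub_add_cancel, add_sub_cancel_right]
  ring

section Sequence

variable {z : ℤ → ℝ}

lemma NoInternalZeros.pos_of_mem_uIcc (hz : NoInternalZeros z) {p q r : ℤ} (hp : 0 < z p)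
    (hq : 0 < z q) (hr : r ∈ Set.uIcc p q) : 0 < z r := by
  rcases lt_trichotomy p q with hpq | rfl | hqp
  · rw [Set.uIcc_of_le hpq.le] at hr
    exact hz p q r hpq (mul_pos hp hq) hr.1 hr.2
  · rw [Set.uIcc_self, Set.mem_singleton_iff] at hr
    rwa [hr]
  · rw [Set.uIcc_of_ge hqp.le] at hr
    exact hz q p r hqp (mul_pos hq hp) hr.1 hr.2

lemma LogConcave.spreadGap_nonneg_of_pos (hz : LogConcave z) (l : ℤ) :
    ∀ k, l - 1 ≤ k → (∀ m, l - 1 ≤ m → m ≤ k + 1 → 0 < z m) →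
      0 ≤ spreadGap z k l := by
  refine Int.leInduction (fun _ => by rw [spreadGap, sub_add_cancel, mul_comm, sub_self])
    fun k hk ih hpos => ?_
  have hgap : z (k + 1) * z (l - 1) ≤ z k * z l :=
    sub_nonneg.1 (ih fun m h₁ h₂ => hpos m h₁ (by omega))
  have hlc : z k * z (k + 2) ≤ z (k + 1) ^ 2 := by
    simpa only [add_sub_cancel_right, add_assoc, one_add_one_eq_two] using hz (k + 1)
  have hk1 := hpos (k + 1) (by omega) (by omega)
  have hk : 0 < z k * z (k + 1) := mul_pos (hpos k (by omega) (by omega)) hk1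
  have hk2 := hpos (k + 2) (by omega) (by omega)
  have hl := hpos (l - 1) le_rfl (by omega)
  rw [spreadGap, sub_nonneg, add_assoc, one_add_one_eq_two]
  refine le_of_mul_le_mul_left ?_ hk
  calc z k * z (k + 1) * (z (k + 2) * z (l - 1))
      = z k * z (k + 2) * (z (k + 1) * z (l - 1)) := by ring
    _ ≤ z (k + 1) ^ 2 * (z k * z l) := by gcongr
    _ = z k * z (k + 1) * (z (k + 1) * z l) := by ring

lemma LogConcave.spreadGap_nonneg (hz₀ : Nonneg z) (hz : LogConcave z) (hnz : NoInternalZeros z)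
    {k l : ℤ} (hkl : l ≤ k + 1) : 0 ≤ spreadGap z k l := by
  rcases (mul_nonneg (hz₀ (l - 1)) (hz₀ (k + 1))).eq_or_lt with h | h
  · rw [spreadGap, mul_comm (z (k + 1)), ← h, sub_zero]
    exact mul_nonneg (hz₀ k) (hz₀ l)
  · exact hz.spreadGap_nonneg_of_pos l k (by omega)
      fun m h₁ h₂ => hnz (l - 1) (k + 1) m (by omega) h h₁ h₂

lemma LogConcave.spreadGap_nonpos (hz₀ : Nonneg z) (hz : LogConcave z) (hnz : NoInternalZeros z)
    {k l : ℤ} (hkl : k + 1 ≤ l) : spreadGap z k l ≤ 0 := by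
  rw [spreadGap_eq_neg, neg_nonpos]
  exact hz.spreadGap_nonneg hz₀ hnz (by omega)

end Sequence

section Convolution

variable {A B : ℤ → ℝ}

lemma spreadGap_mul_spreadGap_nonneg (hA : Nonneg A) (hB : Nonneg B) (hAlc : LogConcave A)
    (hAnz : NoInternalZeros A) (hBlc : LogConcave B) (hBnz : NoInternalZeros B) (n k l : ℤ) :
    0 ≤ spreadGap A k l * spreadGap B (n - l) (n - k) := by
  rcases le_total l (k + 1) with hkl | hkl
  · exact mul_nonneg (hAlc.spreadGap_nonneg hA hAnz hkl)
      (hBlc.spreadGap_nonneg hB hBnz (by omega))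
  · exact mul_nonneg_of_nonpos_of_nonpos (hAlc.spreadGap_nonpos hA hAnz hkl)
      (hBlc.spreadGap_nonpos hB hBnz (by omega))

lemma conv_eq_sum_s13 (B : ℤ → ℝ) {s : Finset ℤ} (hs : support A ⊆ s) (n : ℤ) :
    conv A B n = ∑ k ∈ s, A k * B (n - k) :=
  finsum_eq_sum_of_support_subset _ ((support_mul_subset_left _ _).trans hs)

lemma two_mul_conv_sq_sub (B : ℤ → ℝ) (hAfin : (support A).Finite) (n : ℤ) :
    2 * (conv A B n ^ 2 - conv A B (n - 1) * conv A B (n + 1)) =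
      ∑ᶠ p : ℤ × ℤ, spreadGap A p.1 p.2 * spreadGap B (n - p.2) (n - p.1) := by
  set S := hAfin.toFinset
  have hS : support A ⊆ S := hAfin.coe_toFinset.symm.subset
  set T : ℤ × ℤ → ℝ := fun p =>
    A p.1 * A p.2 * (B (n - p.1) * B (n - p.2) - B (n - 1 - p.1) * B (n + 1 - p.2))
  have hT : support T ⊆ (S ×ˢ S : Finset (ℤ × ℤ)) := fun p hp => by
    have hp' : A p.1 * A p.2 ≠ 0 := left_ne_zero_of_mul hp
    simpa [S] using hp'
  have hexpand : conv A B n ^ 2 - conv A B (n - 1) * conv A B (n + 1) = ∑ᶠ p, T p := by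
    rw [finsum_eq_sum_of_support_subset T hT, sq]
    simp only [conv_eq_sum_s13 B hS, Finset.sum_mul_sum, ← Finset.sum_product',
      ← Finset.sum_sub_distrib]
    exact Finset.sum_congr rfl fun p _ => by ring
  let σ : Equiv.Perm (ℤ × ℤ) :=
    Involutive.toPerm (fun p => (p.2 - 1, p.1 + 1)) fun p => by simp
  have hTfin : (support T).Finite := (S ×ˢ S).finite_toSet.subset hT
  calc 2 * (conv A B n ^ 2 - conv A B (n - 1) * conv A B (n + 1))
      = ∑ᶠ p, T p + ∑ᶠ p, T (σ p) := by rw [hexpand, finsum_comp_equiv, two_mul]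
    _ = ∑ᶠ p, (T p + T (σ p)) :=
      (finsum_add_distrib hTfin (hTfin.preimage σ.injective.injOn)).symm
    _ = _ := finsum_congr fun ⟨k, l⟩ => by
      change T (k, l) + T (l - 1, k + 1) = _
      simp only [T, spreadGap]
      ring_nf

lemma LogConcave.conv (hA : Nonneg A) (hB : Nonneg B) (hAfin : (support A).Finite)
    (hAlc : LogConcave A) (hAnz : NoInternalZeros A) (hBlc : LogConcave B)
    (hBnz : NoInternalZeros B) : LogConcave (conv A B) := fun n => by
  have h := two_mul_conv_sq_sub B hAfin n
  have hsum : 0 ≤ ∑ᶠ p : ℤ × ℤ, spreadGap A p.1 p.2 * spreadGap B (n - p.2) (n - p.1) :=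
    finsum_nonneg fun p => spreadGap_mul_spreadGap_nonneg hA hB hAlc hAnz hBlc hBnz n p.1 p.2
  linarith

lemma conv_nonneg (hA : Nonneg A) (hB : Nonneg B) : Nonneg (conv A B) := fun n =>
  finsum_nonneg fun k => mul_nonneg (hA k) (hB (n - k))

lemma exists_pos_of_conv_pos (hA : Nonneg A) (hB : Nonneg B) {n : ℤ} (h : 0 < conv A B n) :
    ∃ k, 0 < A k ∧ 0 < B (n - k) := by
  by_contra! hzero
  refine h.ne' (finsum_eq_zero_of_forall_eq_zero fun k => ?_)
  rcases (hA k).eq_or_lt with hAk | hAk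
  · rw [← hAk, zero_mul]
  · rw [le_antisymm (hzero k hAk) (hB (n - k)), mul_zero]

lemma conv_pos (hA : Nonneg A) (hB : Nonneg B) (hAfin : (support A).Finite) {n k : ℤ}
    (hAk : 0 < A k) (hBk : 0 < B (n - k)) : 0 < conv A B n :=
  (mul_pos hAk hBk).trans_le <| single_le_finsum k
    (hAfin.subset (support_mul_subset_left _ _)) fun j => mul_nonneg (hA j) (hB (n - j))

lemma NoInternalZeros.conv (hA : Nonneg A) (hB : Nonneg B) (hAfin : (support A).Finite)
    (hAnz : NoInternalZeros A) (hBnz : NoInternalZeros B) : NoInternalZeros (conv A B) := by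
  intro i j k _ hpos hik hkj
  have hi := (conv_nonneg hA hB i).lt_of_ne' (left_ne_zero_of_mul hpos.ne')
  have hj := (conv_nonneg hA hB j).lt_of_ne' (right_ne_zero_of_mul hpos.ne')
  obtain ⟨p, hAp, hBp⟩ := exists_pos_of_conv_pos hA hB hi
  obtain ⟨q, hAq, hBq⟩ := exists_pos_of_conv_pos hA hB hj
  set r := max (min p q) (k - max (i - p) (j - q))
  refine conv_pos hA hB hAfin (k := r) (hAnz.pos_of_mem_uIcc hAp hAq ?_)
    (hBnz.pos_of_mem_uIcc hBp hBq ?_) <;>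
  · rw [Set.mem_uIcc]
    omega

end Convolution

theorem stmt13_general (A B : ℤ → ℝ) (hA : Nonneg A) (hB : Nonneg B)
    (hAfin : (Function.support A).Finite)
    (hAlc : LogConcave A) (hAnz : NoInternalZeros A)
    (hBlc : LogConcave B) (hBnz : NoInternalZeros B) :
    LogConcave (conv A B) ∧ NoInternalZeros (conv A B) :=
  ⟨hAlc.conv hA hB hAfin hAnz hBlc hBnz, hAnz.conv hA hB hAfin hBnz⟩

theorem stmt13 (A B : ℤ → ℝ) (hA : Nonneg A) (hB : Nonneg B)
    (hAfin : (Function.support A).Finite) (hBfin : (Function.support B).Finite)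
    (hAlc : LogConcave A) (hAnz : NoInternalZeros A)
    (hBlc : LogConcave B) (hBnz : NoInternalZeros B) :
    LogConcave (conv A B) ∧ NoInternalZeros (conv A B) :=
  stmt13_general A B hA hB hAfin hAlc hAnz hBlc hBnz
end
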